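/- The determinant of the Poisson-Gamma information matrix satisfies det(M) = (a/b)^p · det(M_Po) / (1 + (m/b)·e₁ᵀ M_Po e₁). -/

import Mathlib

open Matrix Real Finset

/-! With `s = e₁ᵀ M_Po e₁` and `c = s + b/m`, the bracket in `M` factors as
`M_Po * (1 - c⁻¹ • vecMulVec e₁ (e₁ ᵥ* M_Po))`, a rank-one perturbation of the identity. By the
matrix determinant lemma its determinant is `det M_Po * (1 - s / c)`, and
`1 - s / c = 1 / (1 + (m/b) s)`. Positive semidefiniteness gives `s ≥ 0`, so `c ≠ 0`. -/

namespace Matrix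

variable {n α : Type*} [Fintype n] [DecidableEq n] [CommRing α]

theorem det_one_add_vecMulVec (u v : n → α) : det (1 + vecMulVec u v) = 1 + v ⬝ᵥ u := by
  rw [vecMulVec_eq Unit, det_one_add_replicateCol_mul_replicateRow]

theorem det_sub_smul_mul_vecMulVec_mul (A : Matrix n n α) (t : α) (u v : n → α) :
    det (A - t • (A * vecMulVec u v * A)) = det A * (1 - t * (v ⬝ᵥ A *ᵥ u)) := by
  have hfactor : A - t • (A * vecMulVec u v * A) = A * (1 + vecMulVec (-t • u) (v ᵥ* A)) := by
    rw [Matrix.mul_add, Matrix.mul_one, Matrix.mul_assoc, vecMulVec_mul, smul_vecMulVec,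
      Matrix.mul_smul, neg_smul, sub_eq_add_neg]
  rw [hfactor, det_mul, det_one_add_vecMulVec, dotProduct_smul, ← dotProduct_mulVec, smul_eq_mul,
    neg_mul, ← sub_eq_add_neg]

end Matrix

theorem det_poisson_gamma_information_general
    (a b m : ℝ) (hb : 0 < b) (hm : 0 < m)
    (p : ℕ)
    (e1 : Fin p → ℝ)
    (MPo : Matrix (Fin p) (Fin p) ℝ) (hMPo : MPo.PosSemidef)
    (M : Matrix (Fin p) (Fin p) ℝ)
    (hM : M = (a / b) • (MPo -
      (e1 ⬝ᵥ (MPo *ᵥ e1) + b / m)⁻¹ •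
        (MPo * Matrix.vecMulVec e1 e1 * MPo))) :
    M.det = (a / b) ^ p * MPo.det / (1 + (m / b) * (e1 ⬝ᵥ (MPo *ᵥ e1))) := by
  have hs : 0 ≤ e1 ⬝ᵥ (MPo *ᵥ e1) := hMPo.dotProduct_mulVec_nonneg e1
  have hc : e1 ⬝ᵥ (MPo *ᵥ e1) + b / m ≠ 0 := by positivity
  rw [hM, det_smul, det_sub_smul_mul_vecMulVec_mul, Fintype.card_fin]
  field_simp
  ring

/-- The determinant of the Poisson-Gamma information matrix:
`det M = (a/b)^p · det M_Po / (1 + (m/b)·e₁ᵀ M_Po e₁)`. -/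
theorem det_poisson_gamma_information
    (a b m : ℝ) (ha : 0 < a) (hb : 0 < b) (hm : 0 < m)
    (p : ℕ) (hp : 1 ≤ p)
    (e1 : Fin p → ℝ) (he1 : e1 = fun i : Fin p => if (i : ℕ) = 0 then (1:ℝ) else 0)
    (MPo : Matrix (Fin p) (Fin p) ℝ) (hMPo : MPo.PosSemidef)
    (M : Matrix (Fin p) (Fin p) ℝ)
    (hM : M = (a / b) • (MPo -
      (e1 ⬝ᵥ (MPo *ᵥ e1) + b / m)⁻¹ •
        (MPo * Matrix.vecMulVec e1 e1 * MPo))) :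
    M.det = (a / b) ^ p * MPo.det / (1 + (m / b) * (e1 ⬝ᵥ (MPo *ᵥ e1))) :=
  det_poisson_gamma_information_general a b m hb hm p e1 MPo hMPo M hM
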